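/- arXiv:1604.00663 — 3 statements merged into one kernel-verified Lean document; each statement's English description precedes it below -/
import Mathlib

section
/- For all integers a1, a2, a3 ≥ 1, the polynomial F(a1,a2,a3; q, t32, t13, t21) := Σ_{w ∈ W(a1,a2,a3)} q^{gep(w)} · t32^{#32(w)} · t13^{#13(w)} · t21^{#21(w)} in ℤ[q, t32, t13, t21] satisfies the functional recurrence F(a1,a2,a3; q, t32, t13, t21) = t21^{a2} · F(a1−1,a2,a3; q, q·t32, t13, t21) + t32^{a3} · F(a1,a2−1,a3; q, t32, q·t13, t21) + t13^{a1} · F(a1,a2,a3−1; q, t32, t13, q·t21). -/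
open MvPolynomial

/-- The Gepner statistic of a word `w` over a totally ordered alphabet:
the number of triples of positions `i < j < k` such that `w_i w_j w_k`
reduces to one of the odd permutations `132`, `213`, `321`. -/
def gep {α : Type*} [LinearOrder α] (w : List α) : ℕ :=
  (Finset.univ.filter (fun t : Fin w.length × Fin w.length × Fin w.length =>
    t.1 < t.2.1 ∧ t.2.1 < t.2.2 ∧
      ((w.get t.1 < w.get t.2.2 ∧ w.get t.2.2 < w.get t.2.1) ∨
       (w.get t.2.1 < w.get t.1 ∧ w.get t.1 < w.get t.2.2) ∨
       (w.get t.2.2 < w.get t.2.1 ∧ w.get t.2.1 < w.get t.1)))).card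

/-- `pairCount a b w` is the number of pairs of positions `i < j`
with `w_i = a` and `w_j = b`. -/
def pairCount (a b : ℕ) (w : List ℕ) : ℕ :=
  (Finset.univ.filter (fun t : Fin w.length × Fin w.length =>
    t.1 < t.2 ∧ w.get t.1 = a ∧ w.get t.2 = b)).card

/-- `W a1 a2 a3` is the (finite) set of words over the alphabet `{1,2,3}`
with exactly `a1` occurrences of `1`, `a2` occurrences of `2` and
`a3` occurrences of `3`. -/
def W (a1 a2 a3 : ℕ) : Finset (List ℕ) :=
  ((List.replicate a1 1 ++ List.replicate a2 2 ++ List.replicate a3 3).permutations).toFinset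

/-- The generating polynomial `F(a1,a2,a3; q, t32, t13, t21)` where the
variables `q, t32, t13, t21` are `X 0, X 1, X 2, X 3` respectively:
`∑_{w ∈ W(a1,a2,a3)} q^{gep w} t32^{#32 w} t13^{#13 w} t21^{#21 w}`. -/
noncomputable def F (a1 a2 a3 : ℕ) : MvPolynomial (Fin 4) ℤ :=
  ∑ w ∈ W a1 a2 a3,
    X 0 ^ gep w * X 1 ^ pairCount 3 2 w * X 2 ^ pairCount 1 3 w * X 3 ^ pairCount 2 1 w


/-!
Split the words of `W a1 a2 a3` by their last letter `c`. Appending `c` to a word `w` increases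
`#ab` by the number of letters `a` of `w` when `c = b`, which produces the factors `t21 ^ a2`,
`t32 ^ a3`, `t13 ^ a1`. A new `gep` triple must end at the appended `c`, and since all letters lie
in `{1, 2, 3}` its first two letters form a `32` pair when `c = 1`, a `13` pair when `c = 2` and a
`21` pair when `c = 3`: so `gep` grows by exactly that pair count, which is the substitution
`t ↦ q t` of the corresponding variable.
-/

variable {α : Type*}

namespace Fin

def countPairs {n : ℕ} (P : α → α → Prop) [DecidableRel P] (f : Fin n → α) : ℕ :=
  (Finset.univ.filter (fun t : Fin n × Fin n => t.1 < t.2 ∧ P (f t.1) (f t.2))).card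

def countTriples {n : ℕ} (Q : α → α → α → Prop) [∀ x y z, Decidable (Q x y z)]
    (f : Fin n → α) : ℕ :=
  (Finset.univ.filter (fun t : Fin n × Fin n × Fin n =>
    t.1 < t.2.1 ∧ t.2.1 < t.2.2 ∧ Q (f t.1) (f t.2.1) (f t.2.2))).card

theorem countPairs_succ {n : ℕ} (P : α → α → Prop) [DecidableRel P] (f : Fin (n + 1) → α) :
    countPairs P f =
      (Finset.univ.filter fun i => P (f 0) (tail f i)).card + countPairs P (tail f) := by
  simp only [countPairs, Finset.card_filter, Fintype.sum_prod_type]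
  simp only [tail, Fin.sum_univ_succ, succ_lt_succ_iff, succ_pos, not_lt_zero, true_and,
    false_and, if_false, zero_add]
  rfl

theorem countTriples_succ {n : ℕ} (Q : α → α → α → Prop) [∀ x y z, Decidable (Q x y z)]
    (f : Fin (n + 1) → α) :
    countTriples Q f = countPairs (Q (f 0)) (tail f) + countTriples Q (tail f) := by
  simp only [countTriples, countPairs, Finset.card_filter, Fintype.sum_prod_type]
  simp only [tail, Fin.sum_univ_succ, succ_lt_succ_iff, succ_pos, not_lt_zero, true_and,
    false_and, and_false, if_false, Finset.sum_const_zero, zero_add]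
  rfl

end Fin

namespace List

def countPairs (P : α → α → Prop) [DecidableRel P] (w : List α) : ℕ :=
  Fin.countPairs P w.get

def countTriples (Q : α → α → α → Prop) [∀ x y z, Decidable (Q x y z)] (w : List α) : ℕ :=
  Fin.countTriples Q w.get

section

variable (P : α → α → Prop) [DecidableRel P] (Q : α → α → α → Prop)
  [∀ x y z, Decidable (Q x y z)]

theorem card_filter_get (p : α → Prop) [DecidablePred p] (w : List α) :
    (Finset.univ.filter fun i : Fin w.length => p (w.get i)).card = w.countP p := by
  rw [Finset.card_filter]
  simp only [get_eq_getElem, Fin.sum_univ_fun_getElem (f := fun x => if p x then 1 else 0)]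
  induction w <;> simp_all [countP_cons, add_comm]

@[simp]
theorem countPairs_nil : countPairs P [] = 0 := rfl

@[simp]
theorem countTriples_nil : countTriples Q [] = 0 := rfl

theorem countPairs_cons (x : α) (w : List α) :
    countPairs P (x :: w) = w.countP (P x) + countPairs P w := by
  rw [countPairs, Fin.countPairs_succ, ← card_filter_get]
  rfl

theorem countTriples_cons (x : α) (w : List α) :
    countTriples Q (x :: w) = countPairs (Q x) w + countTriples Q w :=
  Fin.countTriples_succ Q _

theorem countPairs_append_singleton (w : List α) (c : α) :
    countPairs P (w ++ [c]) = countPairs P w + w.countP (P · c) := by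
  induction w with
  | nil => simp [countPairs_cons]
  | cons x w ih =>
    simp only [cons_append, countPairs_cons, ih, countP_append, countP_cons, countP_nil]
    ring

theorem countTriples_append_singleton (w : List α) (c : α) :
    countTriples Q (w ++ [c]) = countTriples Q w + countPairs (Q · · c) w := by
  induction w with
  | nil => simp [countTriples_cons]
  | cons x w ih =>
    simp only [cons_append, countTriples_cons, countPairs_append_singleton, ih, countPairs_cons]
    ring

theorem countPairs_congr {P' : α → α → Prop} [DecidableRel P'] {w : List α}
    (h : ∀ x ∈ w, ∀ y ∈ w, P x y ↔ P' x y) : countPairs P w = countPairs P' w := by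
  unfold countPairs Fin.countPairs
  congr 1
  exact Finset.filter_congr fun t _ => and_congr_right fun _ => h _ (get_mem _ _) _ (get_mem _ _)

end

end List

namespace Finset

theorem sum_image_append_singleton [DecidableEq α] {M : Type*} [AddCommMonoid M]
    (s : Finset (List α)) (c : α) (f : List α → M) :
    ∑ w ∈ s.image (· ++ [c]), f w = ∑ w ∈ s, f (w ++ [c]) :=
  sum_image fun _ _ _ _ h => List.append_left_injective [c] h

theorem disjoint_image_append_singleton [DecidableEq α] {s t : Finset (List α)} {c d : α}
    (h : c ≠ d) : Disjoint (s.image (· ++ [c])) (t.image (· ++ [d])) := by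
  simp only [disjoint_left, mem_image]
  rintro _ ⟨u, -, rfl⟩ ⟨v, -, huv⟩
  simp_all

end Finset

def IsGepPattern [LinearOrder α] (x y z : α) : Prop :=
  (x < z ∧ z < y) ∨ (y < x ∧ x < z) ∨ (z < y ∧ y < x)

instance [LinearOrder α] (x y z : α) : Decidable (IsGepPattern x y z) := by
  unfold IsGepPattern; infer_instance

theorem gep_eq_countTriples [LinearOrder α] (w : List α) :
    gep w = w.countTriples IsGepPattern := rfl

theorem pairCount_eq_countPairs (a b : ℕ) (w : List ℕ) :
    pairCount a b w = w.countPairs (fun x y => x = a ∧ y = b) := rfl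

theorem gep_append_singleton [LinearOrder α] (w : List α) (c : α) :
    gep (w ++ [c]) = gep w + w.countPairs (IsGepPattern · · c) := by
  simp only [gep_eq_countTriples, List.countTriples_append_singleton]

theorem pairCount_append_singleton (a b c : ℕ) (w : List ℕ) :
    pairCount a b (w ++ [c]) = pairCount a b w + if c = b then w.count a else 0 := by
  rw [pairCount_eq_countPairs, pairCount_eq_countPairs, List.countPairs_append_singleton]
  split_ifs with hc
  · simp only [hc, and_true]
    exact congrArg _ List.count_eq_countP.symm
  · simp [hc]

theorem gep_append_one {w : List ℕ} (hw : ∀ x ∈ w, 1 ≤ x ∧ x ≤ 3) :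
    gep (w ++ [1]) = gep w + pairCount 3 2 w := by
  rw [gep_append_singleton, pairCount_eq_countPairs]
  congr 1
  refine List.countPairs_congr _ fun x hx y hy => ?_
  have := hw x hx; have := hw y hy
  unfold IsGepPattern; omega

theorem gep_append_two {w : List ℕ} (hw : ∀ x ∈ w, 1 ≤ x ∧ x ≤ 3) :
    gep (w ++ [2]) = gep w + pairCount 1 3 w := by
  rw [gep_append_singleton, pairCount_eq_countPairs]
  congr 1
  refine List.countPairs_congr _ fun x hx y hy => ?_
  have := hw x hx; have := hw y hy
  unfold IsGepPattern; omega

theorem gep_append_three {w : List ℕ} (hw : ∀ x ∈ w, 1 ≤ x ∧ x ≤ 3) :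
    gep (w ++ [3]) = gep w + pairCount 2 1 w := by
  rw [gep_append_singleton, pairCount_eq_countPairs]
  congr 1
  refine List.countPairs_congr _ fun x hx y hy => ?_
  have := hw x hx; have := hw y hy
  unfold IsGepPattern; omega

noncomputable def wordMonomial (w : List ℕ) : MvPolynomial (Fin 4) ℤ :=
  X 0 ^ gep w * X 1 ^ pairCount 3 2 w * X 2 ^ pairCount 1 3 w * X 3 ^ pairCount 2 1 w

noncomputable def qScale (k : Fin 4) : MvPolynomial (Fin 4) ℤ →ₐ[ℤ] MvPolynomial (Fin 4) ℤ :=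
  bind₁ fun i => if i = k then X 0 * X k else X i

theorem wordMonomial_append_one {w : List ℕ} (hw : ∀ x ∈ w, 1 ≤ x ∧ x ≤ 3) :
    wordMonomial (w ++ [1]) = X 3 ^ w.count 2 * qScale 1 (wordMonomial w) := by
  simp only [wordMonomial, gep_append_one hw, pairCount_append_singleton, qScale, map_mul,
    map_pow, bind₁_X_right]
  simp only [Fin.reduceEq, Nat.reduceEqDiff, if_true, if_false]
  ring

theorem wordMonomial_append_two {w : List ℕ} (hw : ∀ x ∈ w, 1 ≤ x ∧ x ≤ 3) :
    wordMonomial (w ++ [2]) = X 1 ^ w.count 3 * qScale 2 (wordMonomial w) := by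
  simp only [wordMonomial, gep_append_two hw, pairCount_append_singleton, qScale, map_mul,
    map_pow, bind₁_X_right]
  simp only [Fin.reduceEq, Nat.reduceEqDiff, if_true, if_false]
  ring

theorem wordMonomial_append_three {w : List ℕ} (hw : ∀ x ∈ w, 1 ≤ x ∧ x ≤ 3) :
    wordMonomial (w ++ [3]) = X 2 ^ w.count 1 * qScale 3 (wordMonomial w) := by
  simp only [wordMonomial, gep_append_three hw, pairCount_append_singleton, qScale, map_mul,
    map_pow, bind₁_X_right]
  simp only [Fin.reduceEq, Nat.reduceEqDiff, if_true, if_false]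
  ring

theorem mem_W {a1 a2 a3 : ℕ} {w : List ℕ} :
    w ∈ W a1 a2 a3 ↔
      w.count 1 = a1 ∧ w.count 2 = a2 ∧ w.count 3 = a3 ∧ ∀ x ∈ w, 1 ≤ x ∧ x ≤ 3 := by
  rw [W, List.mem_toFinset, List.mem_permutations, List.perm_iff_count]
  simp only [List.count_append, List.count_replicate, beq_iff_eq]
  constructor
  · intro h
    refine ⟨by simpa using h 1, by simpa using h 2, by simpa using h 3, fun x hx => ?_⟩
    by_contra hx'
    have : w.count x = 0 := by rw [h x]; split_ifs <;> omega
    exact (List.count_pos_iff.2 hx).ne' this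
  · rintro ⟨h1, h2, h3, hw⟩ x
    by_cases hx : 1 ≤ x ∧ x ≤ 3
    · obtain rfl | rfl | rfl : x = 1 ∨ x = 2 ∨ x = 3 := by omega
      all_goals simp [*]
    · rw [List.count_eq_zero.2 fun h => hx (hw x h)]
      split_ifs <;> omega

theorem W_eq_union {a1 a2 a3 : ℕ} (h1 : 1 ≤ a1) (h2 : 1 ≤ a2) (h3 : 1 ≤ a3) :
    W a1 a2 a3 = (W (a1 - 1) a2 a3).image (· ++ [1]) ∪ (W a1 (a2 - 1) a3).image (· ++ [2]) ∪
      (W a1 a2 (a3 - 1)).image (· ++ [3]) := by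
  ext w
  simp only [Finset.mem_union, Finset.mem_image, mem_W]
  constructor
  · rintro ⟨c1, c2, c3, hw⟩
    obtain rfl | ⟨l, c, rfl⟩ := w.eq_nil_or_concat'
    · simp at c1; omega
    rw [List.forall_mem_append, List.forall_mem_singleton] at hw
    obtain ⟨hl, hc⟩ := hw
    obtain rfl | rfl | rfl : c = 1 ∨ c = 2 ∨ c = 3 := by omega
    all_goals simp only [List.count_append, List.count_singleton, beq_iff_eq, Nat.reduceEqDiff,
      if_true, if_false, add_zero] at c1 c2 c3
    · exact Or.inl (Or.inl ⟨l, ⟨by omega, c2, c3, hl⟩, rfl⟩)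
    · exact Or.inl (Or.inr ⟨l, ⟨c1, by omega, c3, hl⟩, rfl⟩)
    · exact Or.inr ⟨l, ⟨c1, c2, by omega, hl⟩, rfl⟩
  · rintro ((⟨l, ⟨c1, c2, c3, hl⟩, rfl⟩ | ⟨l, ⟨c1, c2, c3, hl⟩, rfl⟩) |
      ⟨l, ⟨c1, c2, c3, hl⟩, rfl⟩)
    all_goals simp only [List.count_append, List.count_singleton, beq_iff_eq, Nat.reduceEqDiff,
      if_true, if_false, add_zero, List.forall_mem_append, List.forall_mem_singleton]
    all_goals exact ⟨by omega, by omega, by omega, hl, by norm_num⟩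

theorem F_eq_sum_wordMonomial (a1 a2 a3 : ℕ) :
    F a1 a2 a3 = ∑ w ∈ W a1 a2 a3, wordMonomial w := rfl

theorem sum_wordMonomial_append_one (a1 a2 a3 : ℕ) :
    ∑ w ∈ W a1 a2 a3, wordMonomial (w ++ [1]) = X 3 ^ a2 * qScale 1 (F a1 a2 a3) := by
  rw [F_eq_sum_wordMonomial, map_sum, Finset.mul_sum]
  refine Finset.sum_congr rfl fun w hw => ?_
  obtain ⟨-, rfl, -, hletters⟩ := mem_W.1 hw
  exact wordMonomial_append_one hletters

theorem sum_wordMonomial_append_two (a1 a2 a3 : ℕ) :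
    ∑ w ∈ W a1 a2 a3, wordMonomial (w ++ [2]) = X 1 ^ a3 * qScale 2 (F a1 a2 a3) := by
  rw [F_eq_sum_wordMonomial, map_sum, Finset.mul_sum]
  refine Finset.sum_congr rfl fun w hw => ?_
  obtain ⟨-, -, rfl, hletters⟩ := mem_W.1 hw
  exact wordMonomial_append_two hletters

theorem sum_wordMonomial_append_three (a1 a2 a3 : ℕ) :
    ∑ w ∈ W a1 a2 a3, wordMonomial (w ++ [3]) = X 2 ^ a1 * qScale 3 (F a1 a2 a3) := by
  rw [F_eq_sum_wordMonomial, map_sum, Finset.mul_sum]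
  refine Finset.sum_congr rfl fun w hw => ?_
  obtain ⟨rfl, -, -, hletters⟩ := mem_W.1 hw
  exact wordMonomial_append_three hletters

theorem gep_genfun_functional_recurrence (a1 a2 a3 : ℕ)
    (h1 : 1 ≤ a1) (h2 : 1 ≤ a2) (h3 : 1 ≤ a3) :
    F a1 a2 a3 =
      X 3 ^ a2 * bind₁ (fun i : Fin 4 => if i = 1 then X 0 * X 1 else X i) (F (a1 - 1) a2 a3)
        + X 1 ^ a3 * bind₁ (fun i : Fin 4 => if i = 2 then X 0 * X 2 else X i) (F a1 (a2 - 1) a3)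
        + X 2 ^ a1 * bind₁ (fun i : Fin 4 => if i = 3 then X 0 * X 3 else X i) (F a1 a2 (a3 - 1)) := by
  open Finset in
  rw [F_eq_sum_wordMonomial, W_eq_union h1 h2 h3,
    sum_union (disjoint_union_left.2 ⟨disjoint_image_append_singleton (by decide),
      disjoint_image_append_singleton (by decide)⟩),
    sum_union (disjoint_image_append_singleton (by decide))]
  simp only [Finset.sum_image_append_singleton, sum_wordMonomial_append_one,
    sum_wordMonomial_append_two, sum_wordMonomial_append_three]
  rfl
end

section
/- For every n ≥ 1, the mean of the Gepner statistic over W(n,n,n) equals n³/2; that is, Σ_{w ∈ W(n,n,n)} gep(w) = (n³/2) · |W(n,n,n)|, where |W(n,n,n)| = (3n)!/(n!)³ (as an identity in ℚ). -/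
set_option maxHeartbeats 1000000


namespace GepAux
open Finset

def cube (m : ℕ) : Finset (ℕ × ℕ × ℕ) := range m ×ˢ range m ×ˢ range m

def Ngep (v : ℕ → ℕ) (m : ℕ) : ℕ :=
  ((cube m).filter (fun t => t.1 < t.2.1 ∧ t.2.1 < t.2.2 ∧
    ((v t.1 < v t.2.2 ∧ v t.2.2 < v t.2.1) ∨ (v t.2.1 < v t.1 ∧ v t.1 < v t.2.2) ∨
     (v t.2.2 < v t.2.1 ∧ v t.2.1 < v t.1)))).card

lemma mem_cube {m : ℕ} {t : ℕ × ℕ × ℕ} :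
    t ∈ cube m ↔ t.1 < m ∧ t.2.1 < m ∧ t.2.2 < m := by
  simp [cube, Finset.mem_product]

lemma gep_eq (w : List ℕ) : gep w = Ngep (fun i => w.getD i 0) w.length := by
  classical
  apply Finset.card_bij (fun (t : Fin w.length × Fin w.length × Fin w.length) _ =>
    ((t.1.1, t.2.1.1, t.2.2.1) : ℕ × ℕ × ℕ))
  · intro t ht
    simp only [Finset.mem_filter, Finset.mem_univ, true_and] at ht
    refine Finset.mem_filter.mpr ⟨mem_cube.mpr ⟨t.1.2, t.2.1.2, t.2.2.2⟩, ?_⟩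
    have e1 : w.getD t.1.1 0 = w.get t.1 := List.getD_eq_getElem _ _ t.1.2
    have e2 : w.getD t.2.1.1 0 = w.get t.2.1 := List.getD_eq_getElem _ _ t.2.1.2
    have e3 : w.getD t.2.2.1 0 = w.get t.2.2 := List.getD_eq_getElem _ _ t.2.2.2
    simp only [e1, e2, e3]
    exact ht
  · intro a _ b _ h
    simp only [Prod.mk.injEq] at h
    exact Prod.ext (Fin.ext h.1) (Prod.ext (Fin.ext h.2.1) (Fin.ext h.2.2))
  · intro t ht
    simp only [Finset.mem_filter] at ht
    obtain ⟨hm, hc⟩ := ht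
    obtain ⟨h1, h2, h3⟩ := mem_cube.mp hm
    refine ⟨(⟨t.1, h1⟩, ⟨t.2.1, h2⟩, ⟨t.2.2, h3⟩), ?_, rfl⟩
    refine Finset.mem_filter.mpr ⟨Finset.mem_univ _, ?_⟩
    have e1 : w.getD t.1 0 = w.get ⟨t.1, h1⟩ := List.getD_eq_getElem _ _ h1
    have e2 : w.getD t.2.1 0 = w.get ⟨t.2.1, h2⟩ := List.getD_eq_getElem _ _ h2
    have e3 : w.getD t.2.2 0 = w.get ⟨t.2.2, h3⟩ := List.getD_eq_getElem _ _ h3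
    simp only [← e1, ← e2, ← e3]
    exact hc

lemma count_eq (w : List ℕ) (c : ℕ) :
    ((range w.length).filter (fun i => w.getD i 0 = c)).card = w.count c := by
  induction w with
  | nil => simp
  | cons a t ih =>
    have : ∀ s : Finset ℕ, s.card = ∑ _i ∈ s, 1 := fun s => (Finset.card_eq_sum_ones s).trans rfl
    rw [Finset.card_filter, List.length_cons, Finset.sum_range_succ',
      List.count_cons, ← ih, Finset.card_filter]
    simp only [List.getD_cons_succ, List.getD_cons_zero, beq_iff_eq]

lemma key (v : ℕ → ℕ) (m : ℕ) (hv : ∀ x, x < m → v x = 1 ∨ v x = 2 ∨ v x = 3) :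
    ((cube m).filter (fun t => t.1 < t.2.1 ∧ t.2.1 < t.2.2 ∧
      v t.1 ≠ v t.2.1 ∧ v t.1 ≠ v t.2.2 ∧ v t.2.1 ≠ v t.2.2)).card =
    ((cube m).filter (fun t => v t.1 = 1 ∧ v t.2.1 = 2 ∧ v t.2.2 = 3)).card := by
  classical
  apply Finset.card_bij (fun (t : ℕ × ℕ × ℕ) _ =>
    ((if v t.1 = 1 then t.1 else if v t.2.1 = 1 then t.2.1 else t.2.2,
      if v t.1 = 2 then t.1 else if v t.2.1 = 2 then t.2.1 else t.2.2,
      if v t.1 = 3 then t.1 else if v t.2.1 = 3 then t.2.1 else t.2.2) : ℕ × ℕ × ℕ))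
  · intro t ht
    rw [Finset.mem_filter, mem_cube] at ht ⊢
    obtain ⟨⟨b1, b2, b3⟩, hc⟩ := ht
    have h1 := hv t.1 b1
    have h2 := hv t.2.1 b2
    have h3 := hv t.2.2 b3
    refine ⟨⟨?_, ?_, ?_⟩, ?_, ?_, ?_⟩ <;> dsimp only <;> split_ifs <;> omega
  · intro a ha b hb h
    rw [Finset.mem_filter, mem_cube] at ha hb
    obtain ⟨⟨a1, a2, a3⟩, hoa1, hoa2, hca⟩ := ha
    obtain ⟨⟨b1, b2, b3⟩, hob1, hob2, hcb⟩ := hb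
    have ha1 := hv a.1 a1; have ha2 := hv a.2.1 a2; have ha3 := hv a.2.2 a3
    have hb1 := hv b.1 b1; have hb2 := hv b.2.1 b2; have hb3 := hv b.2.2 b3
    have claim : ∀ i j k : ℕ, i < j → j < k →
        (v i = 1 ∨ v i = 2 ∨ v i = 3) → (v j = 1 ∨ v j = 2 ∨ v j = 3) →
        (v k = 1 ∨ v k = 2 ∨ v k = 3) → v i ≠ v j → v i ≠ v k → v j ≠ v k →
        (min (if v i = 1 then i else if v j = 1 then j else k)
          (min (if v i = 2 then i else if v j = 2 then j else k)
               (if v i = 3 then i else if v j = 3 then j else k)) = i) ∧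
        (max (if v i = 1 then i else if v j = 1 then j else k)
          (max (if v i = 2 then i else if v j = 2 then j else k)
               (if v i = 3 then i else if v j = 3 then j else k)) = k) ∧
        ((if v i = 1 then i else if v j = 1 then j else k) +
         (if v i = 2 then i else if v j = 2 then j else k) +
         (if v i = 3 then i else if v j = 3 then j else k) = i + j + k) := by
      intro i j k h1 h2 g1 g2 g3 d1 d2 d3
      refine ⟨?_, ?_, ?_⟩ <;> split_ifs <;> omega
    have Ca := claim a.1 a.2.1 a.2.2 hoa1 hoa2 ha1 ha2 ha3 hca.1 hca.2.1 hca.2.2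
    have Cb := claim b.1 b.2.1 b.2.2 hob1 hob2 hb1 hb2 hb3 hcb.1 hcb.2.1 hcb.2.2
    simp only [Prod.mk.injEq] at h
    obtain ⟨e1, e2, e3⟩ := h
    rw [e1, e2, e3] at Ca
    have : a.1 = b.1 ∧ a.2.2 = b.2.2 := by omega
    have hmid : a.2.1 = b.2.1 := by omega
    exact Prod.ext this.1 (Prod.ext hmid this.2)
  · intro b hb
    obtain ⟨p, q, r⟩ := b
    rw [Finset.mem_filter, mem_cube] at hb
    obtain ⟨⟨b1, b2, b3⟩, hv1, hv2, hv3⟩ := hb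
    dsimp only at b1 b2 b3 hv1 hv2 hv3
    have hpq : p ≠ q := by intro h; rw [h] at hv1; omega
    have hpr : p ≠ r := by intro h; rw [h] at hv1; omega
    have hqr : q ≠ r := by intro h; rw [h] at hv2; omega
    have Di : min p (min q r) = p ∨ min p (min q r) = q ∨ min p (min q r) = r := by omega
    have Dk : max p (max q r) = p ∨ max p (max q r) = q ∨ max p (max q r) = r := by omega
    have Dj : p + q + r - min p (min q r) - max p (max q r) = p ∨
              p + q + r - min p (min q r) - max p (max q r) = q ∨
              p + q + r - min p (min q r) - max p (max q r) = r := by omega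
    refine ⟨(min p (min q r), p + q + r - min p (min q r) - max p (max q r),
             max p (max q r)), ?_, ?_⟩
    · rw [Finset.mem_filter, mem_cube]
      refine ⟨⟨?_, ?_, ?_⟩, ?_, ?_, ?_, ?_, ?_⟩ <;> dsimp only
      · omega
      · omega
      · omega
      · omega
      · omega
      · rcases Dj with h'|h'|h' <;> rcases Di with h|h|h <;> rw [h', h] <;> omega
      · rcases Dk with h''|h''|h'' <;> rcases Di with h|h|h <;> rw [h'', h] <;> omega
      · rcases Dk with h''|h''|h'' <;> rcases Dj with h'|h'|h' <;> rw [h', h''] <;> omega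
    · simp only [Prod.mk.injEq]
      rcases Dj with h'|h'|h' <;> rcases Di with h|h|h <;> rcases Dk with h''|h''|h'' <;>
        rw [h', h, h''] <;> split_ifs <;> omega

lemma P_card (v : ℕ → ℕ) (m : ℕ) :
    ((cube m).filter (fun t => v t.1 = 1 ∧ v t.2.1 = 2 ∧ v t.2.2 = 3)).card =
    ((range m).filter (fun i => v i = 1)).card *
    (((range m).filter (fun i => v i = 2)).card *
     ((range m).filter (fun i => v i = 3)).card) := by
  classical
  rw [← Finset.card_product, ← Finset.card_product]
  congr 1
  ext t
  simp only [cube, Finset.mem_filter, Finset.mem_product]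
  tauto

lemma add_key (v : ℕ → ℕ) (m : ℕ) (hv : ∀ x, x < m → v x = 1 ∨ v x = 2 ∨ v x = 3) :
    Ngep v m + Ngep (fun i => 4 - v i) m =
    ((cube m).filter (fun t => t.1 < t.2.1 ∧ t.2.1 < t.2.2 ∧
      v t.1 ≠ v t.2.1 ∧ v t.1 ≠ v t.2.2 ∧ v t.2.1 ≠ v t.2.2)).card := by
  classical
  unfold Ngep
  rw [← Finset.card_union_of_disjoint ?dis, ← Finset.filter_or]
  case dis =>
    rw [Finset.disjoint_filter]
    intro t ht h1 h2
    rw [mem_cube] at ht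
    have g1 := hv t.1 ht.1
    have g2 := hv t.2.1 ht.2.1
    have g3 := hv t.2.2 ht.2.2
    dsimp only at h1 h2
    omega
  refine congrArg Finset.card (Finset.filter_congr ?_)
  intro t ht
  rw [mem_cube] at ht
  have g1 := hv t.1 ht.1
  have g2 := hv t.2.1 ht.2.1
  have g3 := hv t.2.2 ht.2.2
  dsimp only
  constructor
  · intro h; omega
  · intro h; omega

def base (n : ℕ) : List ℕ :=
  List.replicate n 1 ++ List.replicate n 2 ++ List.replicate n 3

lemma mem_W {n : ℕ} {w : List ℕ} : w ∈ W n n n ↔ w.Perm (base n) := by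
  simp [W, base, List.mem_permutations]

lemma mem_base {n x : ℕ} (hx : x ∈ base n) : x = 1 ∨ x = 2 ∨ x = 3 := by
  simp only [base, List.mem_append, List.mem_replicate] at hx
  omega

lemma val_bound {n : ℕ} {w : List ℕ} (hw : w.Perm (base n)) :
    ∀ i, i < w.length → w.getD i 0 = 1 ∨ w.getD i 0 = 2 ∨ w.getD i 0 = 3 := by
  intro i hi
  rw [List.getD_eq_getElem _ _ hi]
  exact mem_base (hw.mem_iff.mp (List.getElem_mem hi))

lemma sigma_mem {n : ℕ} {w : List ℕ} (hw : w.Perm (base n)) :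
    (w.map (fun x => 4 - x)).Perm (base n) := by
  refine (hw.map _).trans ?_
  rw [List.perm_iff_count]
  intro a
  simp only [base, List.map_append, List.map_replicate, List.count_append,
    List.count_replicate]
  norm_num
  omega

lemma sigma_sigma {n : ℕ} {w : List ℕ} (hw : w.Perm (base n)) :
    (w.map (fun x => 4 - x)).map (fun x => 4 - x) = w := by
  rw [List.map_map]
  have h : ∀ x ∈ w, ((fun x => 4 - x) ∘ (fun x => 4 - x)) x = id x := by
    intro x hx
    have := mem_base (hw.mem_iff.mp hx)
    simp only [Function.comp_apply, id_eq]
    omega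
  rw [List.map_congr_left h, List.map_id]

lemma count_base {n : ℕ} {w : List ℕ} (hw : w.Perm (base n)) (c : ℕ) (hc : c = 1 ∨ c = 2 ∨ c = 3) :
    w.count c = n := by
  rw [hw.count_eq]
  simp only [base, List.count_append, List.count_replicate]
  rcases hc with rfl | rfl | rfl <;> norm_num

lemma per_word {n : ℕ} {w : List ℕ} (hw : w.Perm (base n)) :
    gep w + gep (w.map (fun x => 4 - x)) = n * (n * n) := by
  set m := w.length with hm
  set v : ℕ → ℕ := fun i => w.getD i 0 with hv
  have hvb := val_bound hw
  have hlen : (w.map (fun x => 4 - x)).length = m := by rw [List.length_map]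
  have hmap : gep (w.map (fun x => 4 - x)) = Ngep (fun i => 4 - v i) m := by
    rw [gep_eq, hlen]
    refine congrArg Finset.card (Finset.filter_congr ?_)
    intro t ht
    rw [mem_cube] at ht
    have e : ∀ i, i < m → (w.map (fun x => 4 - x)).getD i 0 = 4 - v i := by
      intro i hi
      rw [List.getD_eq_getElem _ _ (by rwa [hlen]), List.getElem_map,
        hv]
      dsimp only
      rw [List.getD_eq_getElem _ _ hi]
    simp only [e _ ht.1, e _ ht.2.1, e _ ht.2.2]
  rw [gep_eq, hmap, ← hm, add_key v m hvb, key v m hvb, P_card,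
    count_eq, count_eq, count_eq,
    count_base hw 1 (by omega), count_base hw 2 (by omega), count_base hw 3 (by omega)]

end GepAux

open GepAux in
theorem gep_words_mean (n : ℕ) (hn : 1 ≤ n) :
    ∑ w ∈ W n n n, (gep w : ℚ) = ((n : ℚ) ^ 3 / 2) * ((W n n n).card : ℚ) := by
  classical
  have hsum : ∑ w ∈ W n n n, gep (w.map (fun x => 4 - x)) = ∑ w ∈ W n n n, gep w := by
    refine Finset.sum_bij' (fun w _ => w.map (fun x => 4 - x))
      (fun w _ => w.map (fun x => 4 - x)) ?_ ?_ ?_ ?_ ?_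
    · exact fun w hw => mem_W.mpr (sigma_mem (mem_W.mp hw))
    · exact fun w hw => mem_W.mpr (sigma_mem (mem_W.mp hw))
    · exact fun w hw => sigma_sigma (mem_W.mp hw)
    · exact fun w hw => sigma_sigma (mem_W.mp hw)
    · exact fun w hw => rfl
  have htot : ∑ w ∈ W n n n, (gep w + gep (w.map (fun x => 4 - x))) =
      (W n n n).card * (n * (n * n)) := by
    rw [Finset.sum_congr rfl (fun w hw => per_word (mem_W.mp hw)), Finset.sum_const,
      smul_eq_mul]
  rw [Finset.sum_add_distrib, hsum] at htot
  have h2 : 2 * ∑ w ∈ W n n n, gep w = (W n n n).card * (n * (n * n)) := by omega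
  have h3 : (2 : ℚ) * ((∑ w ∈ W n n n, gep w : ℕ) : ℚ) =
      ((W n n n).card : ℚ) * ((n : ℚ) * ((n : ℚ) * (n : ℚ))) := by exact_mod_cast h2
  rw [← Nat.cast_sum]
  linear_combination h3 / 2
end

section
/- For every n ≥ 1 and every odd positive integer r, the r-th central moment of the Gepner statistic over W(n,n,n) vanishes: Σ_{w ∈ W(n,n,n)} (gep(w) − n³/2)^r = 0 (as an identity in ℚ). -/
open Finset

theorem Finset.sum_eq_zero_of_involution_neg {ι M : Type*} [AddCommGroup M] [IsAddTorsionFree M]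
    {s : Finset ι} {f : ι → M} (g : ι → ι) (hg : ∀ x ∈ s, g x ∈ s)
    (hgg : ∀ x ∈ s, g (g x) = x) (hf : ∀ x ∈ s, f (g x) = -f x) : ∑ x ∈ s, f x = 0 := by
  rw [← self_eq_neg, ← sum_neg_distrib]
  exact sum_nbij' g g hg hg hgg hgg fun x hx => by rw [hf x hx, neg_neg]

theorem List.card_filter_get_eq_count {α : Type*} [DecidableEq α] (w : List α) (a : α) :
    #{i | w.get i = a} = w.count a := by
  calc #{i | w.get i = a} = (univ.val.map w.get).countP (· = a) :=
        (Multiset.countP_map w.get univ.val (· = a)).symm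
    _ = w.count a := by
      rw [Fin.univ_val_map, List.ofFn_get, Multiset.coe_countP, List.count_eq_countP]; rfl

namespace Gepner

variable {ι α β : Type*} {m n : ℕ}

def IsOddPattern [LT α] (x y z : α) : Prop :=
  x < z ∧ z < y ∨ y < x ∧ x < z ∨ z < y ∧ y < x

def IsEvenPattern [LT α] (x y z : α) : Prop :=
  x < y ∧ y < z ∨ z < x ∧ x < y ∨ y < z ∧ z < x

instance [LT α] [DecidableLT α] (x y z : α) : Decidable (IsOddPattern x y z) :=
  inferInstanceAs (Decidable (_ ∨ _ ∨ _))

instance [LT α] [DecidableLT α] (x y z : α) : Decidable (IsEvenPattern x y z) :=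
  inferInstanceAs (Decidable (_ ∨ _ ∨ _))

theorem isOddPattern_or_isEvenPattern_iff [LinearOrder α] {x y z : α} :
    IsOddPattern x y z ∨ IsEvenPattern x y z ↔ x ≠ y ∧ y ≠ z ∧ x ≠ z := by
  unfold IsOddPattern IsEvenPattern; grind

theorem not_isOddPattern_and_isEvenPattern [LinearOrder α] {x y z : α} :
    ¬(IsOddPattern x y z ∧ IsEvenPattern x y z) := by
  unfold IsOddPattern IsEvenPattern; grind

theorem isOddPattern_comp_iff_of_strictAntiOn [LinearOrder α] [LinearOrder β] {f : α → β}
    {s : Set α} (hf : StrictAntiOn f s) {x y z : α} (hx : x ∈ s) (hy : y ∈ s) (hz : z ∈ s) :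
    IsOddPattern (f x) (f y) (f z) ↔ IsEvenPattern x y z := by
  simp only [IsOddPattern, IsEvenPattern, hf.lt_iff_gt, hx, hy, hz]
  tauto

def tripleCount (P : α → α → α → Prop) [∀ x y z, Decidable (P x y z)] (v : Fin m → α) : ℕ :=
  #{t : Fin m × Fin m × Fin m | t.1 < t.2.1 ∧ t.2.1 < t.2.2 ∧ P (v t.1) (v t.2.1) (v t.2.2)}

theorem gep_eq_tripleCount [LinearOrder α] (w : List α) : gep w = tripleCount IsOddPattern w.get :=
  rfl

theorem tripleCount_comp_cast {P : α → α → α → Prop} [∀ x y z, Decidable (P x y z)]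
    (h : m = n) (v : Fin n → α) :
    tripleCount P (v ∘ Fin.cast h) = tripleCount P v := by
  subst h; rfl

theorem tripleCount_comp_of_strictAntiOn [LinearOrder α] [LinearOrder β] {f : α → β}
    {v : Fin m → α} (hf : StrictAntiOn f (Set.range v)) :
    tripleCount IsOddPattern (f ∘ v) = tripleCount IsEvenPattern v := by
  unfold tripleCount
  congr 1
  refine filter_congr fun t _ => ?_
  simp only [Function.comp_apply,
    isOddPattern_comp_iff_of_strictAntiOn hf (Set.mem_range_self _) (Set.mem_range_self _)
      (Set.mem_range_self _)]

theorem tripleCount_isOddPattern_add_isEvenPattern [LinearOrder α] (v : Fin m → α) :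
    tripleCount IsOddPattern v + tripleCount IsEvenPattern v =
      tripleCount (fun x y z => x ≠ y ∧ y ≠ z ∧ x ≠ z) v := by
  unfold tripleCount
  rw [← card_union_of_disjoint, ← filter_or]
  · simp only [← and_or_left, isOddPattern_or_isEvenPattern_iff]
  · exact disjoint_filter.2 fun t _ hodd heven =>
      not_isOddPattern_and_isEvenPattern ⟨hodd.2.2, heven.2.2⟩

def sort3 [LinearOrder ι] (p q r : ι) : ι × ι × ι :=
  if p < q then (if q < r then (p, q, r) else if p < r then (p, r, q) else (r, p, q))
  else (if p < r then (q, p, r) else if q < r then (q, r, p) else (r, q, p))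

def posOf [DecidableEq α] (v : ι → α) (x : α) (t : ι × ι × ι) : ι :=
  if v t.1 = x then t.1 else if v t.2.1 = x then t.2.1 else t.2.2

theorem tripleCount_pairwise_ne [DecidableEq α] {v : Fin m → α} {a b c : α} (hab : a ≠ b)
    (hbc : b ≠ c) (hac : a ≠ c) (hv : ∀ i, v i = a ∨ v i = b ∨ v i = c) :
    tripleCount (fun x y z => x ≠ y ∧ y ≠ z ∧ x ≠ z) v =
      #{i | v i = a} * #{i | v i = b} * #{i | v i = c} := by
  rw [mul_assoc, ← card_product, ← card_product, tripleCount]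
  -- `posOf` picks the position of each letter in a triple; `sort3` puts such positions in order.
  apply card_nbij' (fun t => (posOf v a t, posOf v b t, posOf v c t))
    (fun t => sort3 t.1 t.2.1 t.2.2)
  · rintro ⟨p, q, r⟩ h
    simp only [coe_filter, coe_product, Set.mem_prod, Set.mem_ofPred_eq, mem_univ, true_and] at h ⊢
    have := hv p; have := hv q; have := hv r
    grind [posOf]
  · rintro ⟨p, q, r⟩ h
    simp only [coe_filter, coe_product, Set.mem_prod, Set.mem_ofPred_eq, mem_univ, true_and,
      sort3] at h ⊢
    grind
  · rintro ⟨p, q, r⟩ h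
    simp only [coe_filter, Set.mem_ofPred_eq, mem_univ, true_and] at h
    have := hv p; have := hv q; have := hv r
    grind [posOf, sort3]
  · rintro ⟨p, q, r⟩ h
    simp only [coe_product, Set.mem_prod, coe_filter, Set.mem_ofPred_eq, mem_univ, true_and] at h
    grind [posOf, sort3]

theorem gep_add_gep_map_of_strictAntiOn [LinearOrder α] [LinearOrder β] {f : α → β}
    {w : List α} (hf : StrictAntiOn f {x | x ∈ w}) :
    gep w + gep (w.map f) = tripleCount (fun x y z => x ≠ y ∧ y ≠ z ∧ x ≠ z) w.get := by
  have hget : (w.map f).get = (f ∘ w.get) ∘ Fin.cast (List.length_map f) := by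
    ext i; simp
  have hf' : StrictAntiOn f (Set.range w.get) := hf.mono (by rintro _ ⟨i, rfl⟩; exact w.get_mem i)
  rw [gep_eq_tripleCount, gep_eq_tripleCount, hget, tripleCount_comp_cast,
    tripleCount_comp_of_strictAntiOn hf', tripleCount_isOddPattern_add_isEvenPattern]

section Words

variable {a b c : ℕ} {w : List ℕ}

theorem mem_W : w ∈ W a b c ↔ w.Perm (.replicate a 1 ++ .replicate b 2 ++ .replicate c 3) := by
  simp [W, List.mem_permutations]

theorem eq_one_or_two_or_three_of_mem_W (hw : w ∈ W a b c) {x : ℕ} (hx : x ∈ w) :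
    x = 1 ∨ x = 2 ∨ x = 3 := by
  have := (mem_W.1 hw).mem_iff.1 hx
  simp only [List.mem_append, List.mem_replicate] at this
  omega

theorem count_of_mem_W (hw : w ∈ W a b c) : w.count 1 = a ∧ w.count 2 = b ∧ w.count 3 = c := by
  simp [(mem_W.1 hw).count_eq, List.count_replicate]

theorem map_sub_mem_W (hw : w ∈ W a b c) : w.map (4 - ·) ∈ W c b a := by
  rw [mem_W] at hw ⊢
  refine (hw.map _).trans (List.perm_iff_count.2 fun x => ?_)
  simp only [List.map_append, List.map_replicate, List.count_append, List.count_replicate]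
  split_ifs <;> omega

theorem map_sub_map_sub_of_mem_W (hw : w ∈ W a b c) : (w.map (4 - ·)).map (4 - ·) = w := by
  refine (List.map_map ..).trans ((List.map_congr_left fun x hx => ?_).trans w.map_id)
  have := eq_one_or_two_or_three_of_mem_W hw hx
  simp only [Function.comp_apply, id]
  omega

theorem gep_add_gep_map_sub_of_mem_W (hw : w ∈ W a b c) :
    gep w + gep (w.map (4 - ·)) = a * b * c := by
  have hletter : ∀ {x}, x ∈ w → x = 1 ∨ x = 2 ∨ x = 3 := eq_one_or_two_or_three_of_mem_W hw
  obtain ⟨h1, h2, h3⟩ := count_of_mem_W hw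
  have hanti : StrictAntiOn (4 - ·) {x | x ∈ w} := fun x hx y hy hxy => by
    have := hletter hx; have := hletter hy
    simp only; omega
  rw [gep_add_gep_map_of_strictAntiOn hanti,
    tripleCount_pairwise_ne (by decide) (by decide) (by decide) fun i => hletter (w.get_mem i),
    List.card_filter_get_eq_count, List.card_filter_get_eq_count, List.card_filter_get_eq_count,
    h1, h2, h3]

end Words

end Gepner

theorem gep_words_odd_central_moments_general (n : ℕ) (r : ℕ) (hr : Odd r) :
    ∑ w ∈ W n n n, ((gep w : ℚ) - (n : ℚ) ^ 3 / 2) ^ r = 0 := by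
  refine sum_eq_zero_of_involution_neg (List.map (4 - ·)) (fun w hw => Gepner.map_sub_mem_W hw)
    (fun w hw => Gepner.map_sub_map_sub_of_mem_W hw) fun w hw => ?_
  have hsum : (gep w : ℚ) + gep (w.map (4 - ·)) = n ^ 3 := by
    rw [pow_three, ← mul_assoc]
    exact_mod_cast Gepner.gep_add_gep_map_sub_of_mem_W hw
  rw [← hr.neg_pow]
  congr 1
  linarith

theorem gep_words_odd_central_moments (n : ℕ) (hn : 1 ≤ n) (r : ℕ) (hr : Odd r) (hr' : 0 < r) :
    ∑ w ∈ W n n n, ((gep w : ℚ) - (n : ℚ) ^ 3 / 2) ^ r = 0 :=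
  gep_words_odd_central_moments_general n r hr
end
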